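/- For any four real matrices B, C, D, F of compatible dimensions, the nuclear norm of the block matrix [[B, C], [D, F]] is at least ‖B‖_* + ‖F‖_*, and it is at least ‖B‖_*, with equality in the latter if and only if C = 0, D = 0, and F = 0. -/

import Mathlib

open Matrix

/-- The nuclear norm of a real matrix: the sum of its singular values,
i.e. the sum of the square roots of the eigenvalues of `Aᵀ * A`. -/
noncomputable def nuclearNorm {m n : Type*} [Fintype m] [Fintype n] [DecidableEq n]
    (A : Matrix m n ℝ) : ℝ :=
  ∑ i, Real.sqrt ((show (Aᵀ * A).IsHermitian by
    simpa only [Matrix.conjTranspose_eq_transpose_of_trivial] using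
      Matrix.isHermitian_conjTranspose_mul_self A).eigenvalues i)

def IsMoorePenroseInv {m n : Type*} [Fintype m] [Fintype n]
    (X : Matrix m n ℝ) (P : Matrix n m ℝ) : Prop :=
  X * P * X = X ∧ P * X * P = P ∧ (X * P)ᵀ = X * P ∧ (P * X)ᵀ = P * X

def IsSkinnySVD {m n r : ℕ} (X : Matrix (Fin m) (Fin n) ℝ)
    (U : Matrix (Fin m) (Fin r) ℝ) (σ : Fin r → ℝ) (V : Matrix (Fin n) (Fin r) ℝ) : Prop :=
  Uᵀ * U = 1 ∧ Vᵀ * V = 1 ∧ (∀ i, 0 < σ i) ∧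
    X = U * Matrix.diagonal σ * Vᵀ ∧ r = X.rank

/-!
The nuclear norm is dual to the operator norm: `‖A‖_* = max tr(Aᵀ W)` over contractions `W`,
the maximum being attained at `W_A = A V Σ⁻¹ Vᵀ`, where `V` is an orthonormal eigenbasis of `Aᵀ A`
and `Σ²` the diagonal of its eigenvalues. Testing `M = [[B, C], [D, F]]` against the block-diagonal
contraction `W_B ⊕ W_F` gives `‖B‖_* + ‖F‖_* ≤ ‖M‖_*`. If `‖M‖_* = ‖B‖_*`, then `F = 0` by that
inequality, and testing `M` against the contraction `[[(1 - s²) W_B, 0], [s W_D, 0]]` gives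
`s ‖D‖_* ≤ s² ‖B‖_*` for all small `s > 0`, so `D = 0`; `C = 0` follows by transposition, since
duality also yields `‖Aᵀ‖_* = ‖A‖_*`.
-/

namespace Matrix

variable {m n : Type*} [Fintype m] [Fintype n]

lemma dotProduct_self_nonneg_real (x : n → ℝ) : 0 ≤ x ⬝ᵥ x := by
  simpa using dotProduct_star_self_nonneg x

lemma dotProduct_sq_le (x y : n → ℝ) : (x ⬝ᵥ y) ^ 2 ≤ (x ⬝ᵥ x) * (y ⬝ᵥ y) := by
  simpa only [dotProduct, pow_two] using Finset.sum_mul_sq_le_sq_mul_sq Finset.univ x y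

lemma mulVec_dotProduct_mulVec (W : Matrix m n ℝ) (x y : n → ℝ) :
    W *ᵥ x ⬝ᵥ W *ᵥ y = x ⬝ᵥ (Wᵀ * W) *ᵥ y := by
  rw [← mulVec_mulVec, dotProduct_mulVec x, vecMul_transpose]

def IsContraction (W : Matrix m n ℝ) : Prop :=
  ∀ x : n → ℝ, W *ᵥ x ⬝ᵥ W *ᵥ x ≤ x ⬝ᵥ x

lemma IsContraction.transpose {W : Matrix m n ℝ} (hW : W.IsContraction) :
    Wᵀ.IsContraction := by
  intro y
  set z := Wᵀ *ᵥ y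
  have hz : z ⬝ᵥ z = y ⬝ᵥ W *ᵥ z := by rw [dotProduct_mulVec y, ← mulVec_transpose]
  have hCS : (z ⬝ᵥ z) ^ 2 ≤ (y ⬝ᵥ y) * (z ⬝ᵥ z) := calc
    (z ⬝ᵥ z) ^ 2 ≤ (y ⬝ᵥ y) * (W *ᵥ z ⬝ᵥ W *ᵥ z) := hz ▸ dotProduct_sq_le y (W *ᵥ z)
    _ ≤ (y ⬝ᵥ y) * (z ⬝ᵥ z) := by gcongr; exacts [dotProduct_self_nonneg_real y, hW z]
  nlinarith [dotProduct_self_nonneg_real z, dotProduct_self_nonneg_real y]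

section BlockContraction

variable {m₁ m₂ n₁ n₂ : Type*} [Fintype m₁] [Fintype m₂] [Fintype n₁] [Fintype n₂]

lemma IsContraction.fromBlocks_diagonal {U : Matrix m₁ n₁ ℝ} {V : Matrix m₂ n₂ ℝ}
    (hU : U.IsContraction) (hV : V.IsContraction) :
    (fromBlocks U 0 0 V).IsContraction := by
  intro x
  rw [← Sum.elim_comp_inl_inr x]
  simp only [fromBlocks_mulVec, Sum.elim_comp_inl, Sum.elim_comp_inr, zero_mulVec, add_zero,
    zero_add, sumElim_dotProduct_sumElim]
  exact add_le_add (hU (x ∘ Sum.inl)) (hV (x ∘ Sum.inr))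

lemma IsContraction.fromBlocks_smul_zero_smul_zero {U : Matrix m₁ n₁ ℝ} {V : Matrix m₂ n₁ ℝ}
    (hU : U.IsContraction) (hV : V.IsContraction) {a b : ℝ} (hab : a ^ 2 + b ^ 2 ≤ 1) :
    (fromBlocks (a • U) 0 (b • V) 0 : Matrix (m₁ ⊕ m₂) (n₁ ⊕ n₂) ℝ).IsContraction := by
  intro x
  rw [← Sum.elim_comp_inl_inr x]
  simp only [fromBlocks_mulVec, Sum.elim_comp_inl, Sum.elim_comp_inr, zero_mulVec, add_zero,
    sumElim_dotProduct_sumElim, smul_mulVec, smul_dotProduct, dotProduct_smul, smul_eq_mul]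
  nlinarith [hU (x ∘ Sum.inl), hV (x ∘ Sum.inl), dotProduct_self_nonneg_real (x ∘ Sum.inl),
    dotProduct_self_nonneg_real (x ∘ Sum.inr), dotProduct_self_nonneg_real (U *ᵥ (x ∘ Sum.inl)),
    dotProduct_self_nonneg_real (V *ᵥ (x ∘ Sum.inl))]

lemma IsContraction.toBlocks₁₁ {W : Matrix (m₁ ⊕ m₂) (n₁ ⊕ n₂) ℝ} (hW : W.IsContraction) :
    W.toBlocks₁₁.IsContraction := by
  intro x
  have h := hW (Sum.elim x 0)
  rw [← fromBlocks_toBlocks W] at h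
  simp only [fromBlocks_mulVec, Sum.elim_comp_inl, Sum.elim_comp_inr, mulVec_zero, add_zero,
    sumElim_dotProduct_sumElim, dotProduct_zero] at h
  linarith [dotProduct_self_nonneg_real (W.toBlocks₂₁ *ᵥ x)]

lemma trace_transpose_mul_fromBlocks (B : Matrix m₁ n₁ ℝ) (C : Matrix m₁ n₂ ℝ)
    (D : Matrix m₂ n₁ ℝ) (F : Matrix m₂ n₂ ℝ) (W₁ : Matrix m₁ n₁ ℝ) (W₂ : Matrix m₁ n₂ ℝ)
    (W₃ : Matrix m₂ n₁ ℝ) (W₄ : Matrix m₂ n₂ ℝ) :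
    trace ((fromBlocks B C D F)ᵀ * fromBlocks W₁ W₂ W₃ W₄) =
      trace (Bᵀ * W₁) + trace (Dᵀ * W₃) + (trace (Cᵀ * W₂) + trace (Fᵀ * W₄)) := by
  simp only [fromBlocks_transpose, fromBlocks_multiply, trace, diag, Fintype.sum_sum_type,
    fromBlocks_apply₁₁, fromBlocks_apply₂₂, add_apply, Finset.sum_add_distrib]

end BlockContraction

variable {m n : Type*} [Fintype m]

lemma isHermitian_transpose_mul_self (A : Matrix m n ℝ) : (Aᵀ * A).IsHermitian := by
  simpa only [conjTranspose_eq_transpose_of_trivial] using isHermitian_conjTranspose_mul_self A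

lemma transpose_mul_apply_self (P Q : Matrix m n ℝ) (i : n) : (Pᵀ * Q) i i = Pᵀ i ⬝ᵥ Qᵀ i := rfl

variable [Fintype n] [DecidableEq n]

lemma exists_orthogonal_transpose_mul_self_eq_diagonal (A : Matrix m n ℝ) :
    ∃ V : Matrix n n ℝ, Vᵀ * V = 1 ∧ V * Vᵀ = 1 ∧
      (A * V)ᵀ * (A * V) = diagonal (isHermitian_transpose_mul_self A).eigenvalues := by
  set hA := isHermitian_transpose_mul_self A
  have hU := hA.eigenvectorUnitary.2
  have hdiag := hA.conjStarAlgAut_star_eigenvectorUnitary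
  rw [Unitary.conjStarAlgAut_star_apply] at hdiag
  simp only [star_eq_conjTranspose, conjTranspose_eq_transpose_of_trivial,
    RCLike.ofReal_real_eq_id, Function.id_comp] at hU hdiag
  refine ⟨hA.eigenvectorUnitary, (mem_unitaryGroup_iff').mp hU, (mem_unitaryGroup_iff).mp hU, ?_⟩
  rw [transpose_mul, ← hdiag]
  simp only [Matrix.mul_assoc]

lemma trace_transpose_mul_le_nuclearNorm (A : Matrix m n ℝ) {W : Matrix m n ℝ}
    (hW : W.IsContraction) : trace (Aᵀ * W) ≤ nuclearNorm A := by
  obtain ⟨V, hVV, hVV', hdiag⟩ := exists_orthogonal_transpose_mul_self_eq_diagonal A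
  set μ := (isHermitian_transpose_mul_self A).eigenvalues
  have htrace : trace (Aᵀ * W) = trace ((A * V)ᵀ * (W * V)) := by
    rw [transpose_mul, Matrix.mul_assoc, trace_mul_comm Vᵀ, Matrix.mul_assoc, Matrix.mul_assoc,
      hVV', Matrix.mul_one]
  have hcol : ∀ i, (W * V)ᵀ i = W *ᵥ Vᵀ i := fun i => rfl
  have hterm : ∀ i, ((A * V)ᵀ * (W * V)) i i ≤ √(μ i) := fun i => by
    refine (le_abs_self _).trans (Real.abs_le_sqrt ?_)
    have hAV : (A * V)ᵀ i ⬝ᵥ (A * V)ᵀ i = μ i := by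
      rw [← transpose_mul_apply_self, hdiag, diagonal_apply_eq]
    have hWV : (W * V)ᵀ i ⬝ᵥ (W * V)ᵀ i ≤ 1 := by
      have h1 : Vᵀ i ⬝ᵥ Vᵀ i = 1 := by rw [← transpose_mul_apply_self, hVV, one_apply_eq]
      exact hcol i ▸ h1 ▸ hW (Vᵀ i)
    rw [transpose_mul_apply_self]
    calc _ ≤ ((A * V)ᵀ i ⬝ᵥ (A * V)ᵀ i) * ((W * V)ᵀ i ⬝ᵥ (W * V)ᵀ i) := dotProduct_sq_le _ _
      _ ≤ μ i := by
        rw [hAV]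
        exact mul_le_of_le_one_right (hAV ▸ dotProduct_self_nonneg_real _) hWV
  rw [htrace]
  exact Finset.sum_le_sum fun i _ => hterm i

lemma exists_isContraction_trace_transpose_mul_eq_nuclearNorm (A : Matrix m n ℝ) :
    ∃ W : Matrix m n ℝ, W.IsContraction ∧ trace (Aᵀ * W) = nuclearNorm A := by
  obtain ⟨V, hVV, hVV', hdiag⟩ := exists_orthogonal_transpose_mul_self_eq_diagonal A
  set μ := (isHermitian_transpose_mul_self A).eigenvalues
  -- `g i = 0` where `μ i = 0`, since `(√0)⁻¹ = 0`
  set g : n → ℝ := fun i => (√(μ i))⁻¹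
  refine ⟨A * V * diagonal g * Vᵀ, fun x => ?_, ?_⟩
  · set y := Vᵀ *ᵥ x
    have hy : y ⬝ᵥ y = x ⬝ᵥ x := by
      rw [mulVec_dotProduct_mulVec, transpose_transpose, hVV', one_mulVec]
    rw [← mulVec_mulVec, ← mulVec_mulVec, mulVec_dotProduct_mulVec, hdiag, ← hy]
    simp only [dotProduct, mulVec_diagonal]
    refine Finset.sum_le_sum fun i _ => ?_
    have hμg : μ i * g i ^ 2 ≤ 1 := by
      have hμ : 0 ≤ μ i := eigenvalues_conjTranspose_mul_self_nonneg A i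
      rw [inv_pow, Real.sq_sqrt hμ]
      exact mul_inv_le_one
    calc g i * y i * (μ i * (g i * y i)) = μ i * g i ^ 2 * (y i * y i) := by ring
      _ ≤ y i * y i := mul_le_of_le_one_left (mul_self_nonneg _) hμg
  · have hcycle :
        trace (Aᵀ * (A * V * diagonal g * Vᵀ)) = trace ((A * V)ᵀ * (A * V) * diagonal g) := by
      rw [← Matrix.mul_assoc, trace_mul_comm, transpose_mul]
      simp only [Matrix.mul_assoc]
    rw [hcycle, hdiag, diagonal_mul_diagonal, trace_diagonal]
    exact Finset.sum_congr rfl fun i _ => by rw [← div_eq_mul_inv, Real.div_sqrt]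

lemma nuclearNorm_nonneg (A : Matrix m n ℝ) : 0 ≤ nuclearNorm A :=
  Finset.sum_nonneg fun _ _ => Real.sqrt_nonneg _

lemma eq_zero_of_nuclearNorm_le_zero {A : Matrix m n ℝ} (h : nuclearNorm A ≤ 0) : A = 0 := by
  obtain ⟨V, -, hVV', hdiag⟩ := exists_orthogonal_transpose_mul_self_eq_diagonal A
  have hμ : (isHermitian_transpose_mul_self A).eigenvalues = 0 := funext fun i =>
    le_antisymm (Real.sqrt_eq_zero'.mp <| (Finset.sum_eq_zero_iff_of_nonneg
      fun _ _ => Real.sqrt_nonneg _).mp (h.antisymm (nuclearNorm_nonneg A)) i (Finset.mem_univ i))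
      (eigenvalues_conjTranspose_mul_self_nonneg A i)
  rw [hμ, diagonal_zero', ← conjTranspose_eq_transpose_of_trivial,
    conjTranspose_mul_self_eq_zero] at hdiag
  rw [← Matrix.mul_one A, ← hVV', ← Matrix.mul_assoc, hdiag, Matrix.zero_mul]

lemma nuclearNorm_le_nuclearNorm_transpose [DecidableEq m] (A : Matrix m n ℝ) :
    nuclearNorm A ≤ nuclearNorm Aᵀ := by
  obtain ⟨W, hW, hA⟩ := exists_isContraction_trace_transpose_mul_eq_nuclearNorm A
  calc nuclearNorm A = trace (Aᵀᵀ * Wᵀ) := by rw [← hA, trace_transpose_mul]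
    _ ≤ nuclearNorm Aᵀ := trace_transpose_mul_le_nuclearNorm Aᵀ hW.transpose

lemma nuclearNorm_transpose [DecidableEq m] (A : Matrix m n ℝ) :
    nuclearNorm Aᵀ = nuclearNorm A :=
  le_antisymm (by simpa using nuclearNorm_le_nuclearNorm_transpose Aᵀ)
    (nuclearNorm_le_nuclearNorm_transpose A)

section Blocks

variable {m₁ m₂ n₁ n₂ : Type*} [Fintype m₁] [Fintype m₂] [Fintype n₁] [Fintype n₂]
  [DecidableEq n₁] [DecidableEq n₂]
  (B : Matrix m₁ n₁ ℝ) (C : Matrix m₁ n₂ ℝ) (D : Matrix m₂ n₁ ℝ) (F : Matrix m₂ n₂ ℝ)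

lemma nuclearNorm_add_nuclearNorm_le_nuclearNorm_fromBlocks :
    nuclearNorm B + nuclearNorm F ≤ nuclearNorm (fromBlocks B C D F) := by
  obtain ⟨WB, hWB, hB⟩ := exists_isContraction_trace_transpose_mul_eq_nuclearNorm B
  obtain ⟨WF, hWF, hF⟩ := exists_isContraction_trace_transpose_mul_eq_nuclearNorm F
  calc nuclearNorm B + nuclearNorm F = trace ((fromBlocks B C D F)ᵀ * fromBlocks WB 0 0 WF) := by
        simp only [trace_transpose_mul_fromBlocks, hB, hF, Matrix.mul_zero, trace_zero, add_zero,
          zero_add]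
    _ ≤ _ := trace_transpose_mul_le_nuclearNorm _ (hWB.fromBlocks_diagonal hWF)

lemma nuclearNorm_le_nuclearNorm_fromBlocks :
    nuclearNorm B ≤ nuclearNorm (fromBlocks B C D F) := by
  linarith [nuclearNorm_add_nuclearNorm_le_nuclearNorm_fromBlocks B C D F, nuclearNorm_nonneg F]

lemma nuclearNorm_fromBlocks_zero :
    nuclearNorm (fromBlocks B 0 0 0 : Matrix (m₁ ⊕ m₂) (n₁ ⊕ n₂) ℝ) = nuclearNorm B := by
  refine le_antisymm ?_ (nuclearNorm_le_nuclearNorm_fromBlocks B 0 0 0)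
  obtain ⟨W, hW, hM⟩ := exists_isContraction_trace_transpose_mul_eq_nuclearNorm
    (fromBlocks B 0 0 0 : Matrix (m₁ ⊕ m₂) (n₁ ⊕ n₂) ℝ)
  rw [← hM, ← fromBlocks_toBlocks W]
  simp only [trace_transpose_mul_fromBlocks, transpose_zero, Matrix.zero_mul, trace_zero, add_zero]
  exact trace_transpose_mul_le_nuclearNorm B hW.toBlocks₁₁

lemma eq_zero_of_nuclearNorm_fromBlocks_le₂₁
    (h : nuclearNorm (fromBlocks B C D F) ≤ nuclearNorm B) : D = 0 := by
  obtain ⟨WB, hWB, hB⟩ := exists_isContraction_trace_transpose_mul_eq_nuclearNorm B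
  obtain ⟨WD, hWD, hD⟩ := exists_isContraction_trace_transpose_mul_eq_nuclearNorm D
  have hD_le : ∀ s : ℝ, 0 < s → s ≤ 1 → nuclearNorm D ≤ s * nuclearNorm B := fun s hs hs1 => by
    have hW := hWB.fromBlocks_smul_zero_smul_zero hWD (n₂ := n₂) (a := 1 - s ^ 2) (b := s)
      (by nlinarith [mul_nonneg (sq_nonneg s) (by nlinarith : (0 : ℝ) ≤ 1 - s ^ 2)])
    have := (trace_transpose_mul_le_nuclearNorm (fromBlocks B C D F) hW).trans h
    simp only [trace_transpose_mul_fromBlocks, Matrix.mul_smul, trace_smul, hB, hD,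
      Matrix.mul_zero, trace_zero, add_zero, smul_eq_mul] at this
    exact le_of_mul_le_mul_left (by linarith) hs
  refine eq_zero_of_nuclearNorm_le_zero (ge_of_tendsto (f := fun s => s * nuclearNorm B)
    (x := nhdsWithin 0 (Set.Ioi 0)) ?_ ?_)
  · simpa using ((continuous_mul_const (nuclearNorm B)).tendsto 0).mono_left nhdsWithin_le_nhds
  · filter_upwards [Ioo_mem_nhdsGT one_pos] with s hs using hD_le s hs.1 hs.2.le

lemma eq_zero_of_nuclearNorm_fromBlocks_le₁₂ [DecidableEq m₁] [DecidableEq m₂]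
    (h : nuclearNorm (fromBlocks B C D F) ≤ nuclearNorm B) : C = 0 := by
  rw [← nuclearNorm_transpose, ← nuclearNorm_transpose B, fromBlocks_transpose] at h
  simpa using eq_zero_of_nuclearNorm_fromBlocks_le₂₁ Bᵀ Dᵀ Cᵀ Fᵀ h

lemma nuclearNorm_fromBlocks_eq_iff [DecidableEq m₁] [DecidableEq m₂] :
    nuclearNorm (fromBlocks B C D F) = nuclearNorm B ↔ C = 0 ∧ D = 0 ∧ F = 0 := by
  refine ⟨fun h => ⟨eq_zero_of_nuclearNorm_fromBlocks_le₁₂ B C D F h.le,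
    eq_zero_of_nuclearNorm_fromBlocks_le₂₁ B C D F h.le, eq_zero_of_nuclearNorm_le_zero ?_⟩, ?_⟩
  · linarith [nuclearNorm_add_nuclearNorm_le_nuclearNorm_fromBlocks B C D F]
  · rintro ⟨rfl, rfl, rfl⟩
    exact nuclearNorm_fromBlocks_zero B

end Blocks

end Matrix

/-- Nuclear norm of a block matrix dominates the sum of the nuclear norms of the
diagonal blocks, and dominates the nuclear norm of the top-left block, with
equality in the latter iff the other three blocks vanish. -/
theorem stmt8 {m₁ m₂ n₁ n₂ : ℕ}
    (B : Matrix (Fin m₁) (Fin n₁) ℝ) (C : Matrix (Fin m₁) (Fin n₂) ℝ)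
    (D : Matrix (Fin m₂) (Fin n₁) ℝ) (F : Matrix (Fin m₂) (Fin n₂) ℝ) :
    nuclearNorm B + nuclearNorm F ≤ nuclearNorm (Matrix.fromBlocks B C D F) ∧
    nuclearNorm B ≤ nuclearNorm (Matrix.fromBlocks B C D F) ∧
    (nuclearNorm (Matrix.fromBlocks B C D F) = nuclearNorm B ↔
      C = 0 ∧ D = 0 ∧ F = 0) :=
  ⟨nuclearNorm_add_nuclearNorm_le_nuclearNorm_fromBlocks B C D F,
    nuclearNorm_le_nuclearNorm_fromBlocks B C D F, nuclearNorm_fromBlocks_eq_iff B C D F⟩
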